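/- arXiv:2408.14924 — 4 statements merged into one kernel-verified Lean document; each statement's English description precedes it below -/
import Mathlib

section
/- If P(z) = ∏_{j=1}^n (z - p_j) with distinct complex numbers p_j, then P''(z) = -P(z) · ∑_{k=1}^n [ (1/(z - p_k)) · ∑_{j ≠ k} 2/(p_j - p_k) ] for all z not equal to any p_j. -/
open Finset Polynomial

/-- Derivative of a product of monic linear factors over a finset. -/
lemma aux_derivative_prod {n : ℕ} (c : Fin n → ℂ) (s : Finset (Fin n)) :
    derivative (∏ j ∈ s, (X - C (c j))) =
      ∑ k ∈ s, ∏ j ∈ s.erase k, (X - C (c j)) := by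
  classical
  induction s using Finset.induction with
  | empty => simp
  | @insert a s ha ih =>
    rw [Finset.prod_insert ha, derivative_mul, derivative_X_sub_C, one_mul, ih,
      Finset.sum_insert ha, Finset.erase_insert ha, Finset.mul_sum]
    congr 1
    refine Finset.sum_congr rfl fun i hi => ?_
    rw [Finset.erase_insert_of_ne (by rintro rfl; exact ha hi),
      Finset.prod_insert (fun h => ha (Finset.mem_of_mem_erase h))]

theorem stmt_6 (n : ℕ) (p : Fin n → ℂ) (hp : Function.Injective p)
    (P : ℂ → ℂ) (hP : P = fun z => ∏ j, (z - p j)) :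
    ∀ z : ℂ, (∀ j, z ≠ p j) →
      deriv (deriv P) z =
        -P z * ∑ k, (1 / (z - p k) *
          ∑ j ∈ Finset.univ.filter (fun j => j ≠ k), 2 / (p j - p k)) := by
  classical
  intro z hz
  have hz' : ∀ j, z - p j ≠ 0 := fun j => sub_ne_zero.mpr (hz j)
  set Q : ℂ[X] := ∏ j, (X - C (p j)) with hQ
  have hPQ : P = fun w => Q.eval w := by
    funext w
    simp [hP, hQ, Polynomial.eval_prod]
  have hd1 : derivative Q = ∑ k, ∏ j ∈ univ.erase k, (X - C (p j)) :=
    aux_derivative_prod p univ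
  have hd2 : derivative (derivative Q) =
      ∑ k, ∑ j ∈ univ.erase k, ∏ i ∈ (univ.erase k).erase j, (X - C (p i)) := by
    rw [hd1, map_sum]
    exact Finset.sum_congr rfl fun k _ => aux_derivative_prod p (univ.erase k)
  have hD : deriv (deriv P) z =
      ∑ k, ∑ j ∈ univ.erase k, ∏ i ∈ (univ.erase k).erase j, (z - p i) := by
    have h1 : deriv P = fun w => (derivative Q).eval w := by
      funext w
      rw [hPQ]
      exact Polynomial.deriv (p := Q)
    rw [h1, Polynomial.deriv, hd2]
    simp [Polynomial.eval_finset_sum, Polynomial.eval_prod]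
  -- value of the inner products
  have hprod : ∀ k, ∀ j ∈ univ.erase k,
      ∏ i ∈ (univ.erase k).erase j, (z - p i) = P z / ((z - p k) * (z - p j)) := by
    intro k j hj
    have h1 : P z = (z - p k) * ∏ i ∈ univ.erase k, (z - p i) := by
      rw [hP]; exact (Finset.mul_prod_erase univ _ (mem_univ k)).symm
    have h2 : ∏ i ∈ univ.erase k, (z - p i) =
        (z - p j) * ∏ i ∈ (univ.erase k).erase j, (z - p i) :=
      (Finset.mul_prod_erase _ _ hj).symm
    rw [h1, h2]
    field_simp [hz' k, hz' j]
  -- abbreviation for the RHS summand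
  set h : Fin n → Fin n → ℂ := fun k j => -P z * (1 / (z - p k) * (2 / (p j - p k))) with hh
  have hRHS : -P z * ∑ k, (1 / (z - p k) *
      ∑ j ∈ Finset.univ.filter (fun j => j ≠ k), 2 / (p j - p k)) =
      ∑ k, ∑ j ∈ univ.erase k, h k j := by
    rw [Finset.mul_sum]
    refine Finset.sum_congr rfl fun k _ => ?_
    rw [Finset.filter_ne', Finset.mul_sum, Finset.mul_sum]
  have hswap : (∑ k, ∑ j ∈ univ.erase k, h j k) = ∑ k, ∑ j ∈ univ.erase k, h k j := by
    exact Finset.sum_comm' (fun x y => by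
      simp only [Finset.mem_univ, Finset.mem_erase, true_and, and_true, ne_comm])
  -- pointwise identity
  have hpt : ∀ k, ∀ j ∈ univ.erase k,
      P z / ((z - p k) * (z - p j)) = (h k j + h j k) / 2 := by
    intro k j hj
    have hjk : j ≠ k := (Finset.mem_erase.mp hj).1
    have h1 : p j - p k ≠ 0 := sub_ne_zero.mpr (fun e => hjk (hp e))
    have h2 : p k - p j ≠ 0 := sub_ne_zero.mpr (fun e => hjk (hp e).symm)
    rw [hh]
    field_simp [hz' k, hz' j]
    ring
  calc deriv (deriv P) z
      = ∑ k, ∑ j ∈ univ.erase k, P z / ((z - p k) * (z - p j)) := by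
        rw [hD]
        exact Finset.sum_congr rfl fun k _ => Finset.sum_congr rfl (hprod k)
    _ = ∑ k, ∑ j ∈ univ.erase k, (h k j + h j k) / 2 := by
        exact Finset.sum_congr rfl fun k _ => Finset.sum_congr rfl (hpt k)
    _ = ((∑ k, ∑ j ∈ univ.erase k, h k j) + ∑ k, ∑ j ∈ univ.erase k, h j k) / 2 := by
        rw [← Finset.sum_add_distrib]
        rw [Finset.sum_div]
        refine Finset.sum_congr rfl fun k _ => ?_
        rw [← Finset.sum_add_distrib, Finset.sum_div]
    _ = ∑ k, ∑ j ∈ univ.erase k, h k j := by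
        rw [hswap]; ring
    _ = -P z * ∑ k, (1 / (z - p k) *
          ∑ j ∈ Finset.univ.filter (fun j => j ≠ k), 2 / (p j - p k)) := hRHS.symm
end

section
/- There is no monic polynomial P of degree 4 over ℂ with 4 distinct roots such that for some polynomial Q̄ the identity P''(z)P(z+1) - P'(z)P'(z+1) + P(z)Q̄(z+1) - P(z+1)Q̄(z) = 0 holds; indeed any degree-4 solution (up to translation) is P(z) = z^2(z+1)^2, which has repeated roots. -/
open Polynomial

set_option maxHeartbeats 2000000 in
private lemma main_stmt8 : ∀ (P Q : ℂ[X]), P.Monic → P.natDegree = 4 →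
    derivative (derivative P) * P.comp (X + 1)
      - derivative P * (derivative P).comp (X + 1)
      + P * Q.comp (X + 1) - P.comp (X + 1) * Q = 0 →
    ∃ c : ℂ, P = (X - C c) ^ 2 * (X - C c + 1) ^ 2 := by
  intro P Q hm hdeg heq
  set a := P.coeff 3 with hadef
  set b := P.coeff 2 with hbdef
  set c := P.coeff 1 with hcdef
  set d := P.coeff 0 with hddef
  have hP : P = X^4 + C a * X^3 + C b * X^2 + C c * X + C d := by
    have h5 : P.natDegree < 5 := by omega
    have h4 : P.coeff 4 = 1 := by
      have := hm.coeff_natDegree; rwa [hdeg] at this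
    conv_lhs => rw [P.as_sum_range' 5 h5]
    simp [Finset.sum_range_succ, h4, C_mul_X_pow_eq_monomial.symm, C_mul_X_eq_monomial.symm]
    ring
  -- division with remainder
  set q := Q /ₘ P with hqdef
  set r := Q %ₘ P with hrdef
  have hQ : r + P * q = Q := Q.modByMonic_add_div P
  have hrd : r.natDegree ≤ 3 := by
    rcases eq_or_ne r 0 with h | h
    · simp [h]
    · have h1 := Q.degree_modByMonic_lt hm
      have h2 : P.degree = 4 := by rw [degree_eq_natDegree hm.ne_zero, hdeg]; rfl
      rw [h2, ← hrdef] at h1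
      have h3 : r.natDegree < 4 := (natDegree_lt_iff_degree_lt h).mpr (by exact_mod_cast h1)
      omega
  have hX1 : (X + 1 : ℂ[X]) = X + C 1 := by rw [C_1]
  have hPA : (P.comp (X+1)).natDegree = 4 := by
    rw [natDegree_comp, hX1, natDegree_X_add_C, hdeg, mul_one]
  have hQc : Q.comp (X+1) = r.comp (X+1) + P.comp (X+1) * q.comp (X+1) := by
    rw [← hQ]; simp [add_comp, mul_comp]
  -- the quotient is invariant under the shift
  have hq : q.comp (X+1) = q := by
    by_contra hne
    have hs : q.comp (X+1) - q ≠ 0 := sub_ne_zero.mpr hne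
    set s := q.comp (X+1) - q with hsdef
    have key : P * P.comp (X+1) * s =
        -(derivative (derivative P) * P.comp (X + 1)
            - derivative P * (derivative P).comp (X + 1)
            + P * r.comp (X + 1) - P.comp (X + 1) * r) := by
      rw [hsdef]
      linear_combination heq - P * hQc - (P.comp (X+1)) * hQ
    have hL : (P * P.comp (X+1) * s).natDegree = 8 + s.natDegree := by
      have hP0 : P ≠ 0 := hm.ne_zero
      have hA0 : P.comp (X+1) ≠ 0 := fun h => by simp [h] at hPA
      rw [natDegree_mul (mul_ne_zero hP0 hA0) hs, natDegree_mul hP0 hA0, hdeg, hPA]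
    have hd1 : (derivative P).natDegree ≤ 3 := by
      have := P.natDegree_derivative_le; omega
    have hd2 : (derivative (derivative P)).natDegree ≤ 2 := by
      have := (derivative P).natDegree_derivative_le; omega
    have hcompdeg : ∀ (f : ℂ[X]) (n : ℕ), f.natDegree ≤ n → (f.comp (X+1)).natDegree ≤ n := by
      intro f n hf
      rw [natDegree_comp, hX1, natDegree_X_add_C, mul_one]; exact hf
    have hR : (-(derivative (derivative P) * P.comp (X + 1)
            - derivative P * (derivative P).comp (X + 1)
            + P * r.comp (X + 1) - P.comp (X + 1) * r)).natDegree ≤ 7 := by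
      rw [natDegree_neg]
      refine le_trans (natDegree_sub_le _ _)
        (max_le (le_trans (natDegree_add_le _ _) (max_le ?_ ?_)) ?_)
      · refine le_trans (natDegree_sub_le _ _) (max_le ?_ ?_) <;>
          refine le_trans (natDegree_mul_le) ?_
        · have := hcompdeg P 4 hdeg.le; omega
        · have := hcompdeg (derivative P) 3 hd1; omega
      · refine le_trans natDegree_mul_le ?_
        have := hcompdeg r 3 hrd; omega
      · refine le_trans natDegree_mul_le ?_
        have := hcompdeg P 4 hdeg.le; omega
    rw [key] at hL
    omega
  -- the reduced equation with the remainder only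
  have heq' : derivative (derivative P) * P.comp (X + 1)
      - derivative P * (derivative P).comp (X + 1)
      + P * r.comp (X + 1) - P.comp (X + 1) * r = 0 := by
    linear_combination heq - P * hQc - (P.comp (X+1)) * hQ
      - (P * P.comp (X+1)) * hq
  set r0 := r.coeff 0 with hr0def
  set r1 := r.coeff 1 with hr1def
  set r2 := r.coeff 2 with hr2def
  set r3 := r.coeff 3 with hr3def
  have hr : r = C r3 * X^3 + C r2 * X^2 + C r1 * X + C r0 := by
    have h4 : r.natDegree < 4 := by omega
    conv_lhs => rw [r.as_sum_range' 4 h4]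
    simp [Finset.sum_range_succ, C_mul_X_pow_eq_monomial.symm, C_mul_X_eq_monomial.symm]
    ring
  rw [hP, hr] at heq'
  -- normal form of the equation
  have hBig :
      C ((-1)*r0 + 1*d*r3 + 1*d*r2 + 1*d*r1 + (-4)*c + (-1)*c*r0 + (-1)*c*c + 2*b + (-1)*b*r0 + 2*b*d + 2*b*b + (-1)*a*r0 + (-3)*a*c + 2*a*b)
      + C ((-1)*r1 + (-4)*r0 + 3*d*r3 + 2*d*r2 + (-12)*c + 1*c*r3 + 1*c*r2 + (-1)*b*r1 + (-2)*b*r0 + (-2)*b*c + 6*a + (-1)*a*r1 + (-3)*a*r0 + 6*a*d + 6*a*b + 6*a*a) * X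
      + C (12 + (-1)*r2 + (-4)*r1 + (-6)*r0 + 12*d + 3*d*r3 + 3*c*r3 + 1*c*r2 + 1*b*r3 + (-1)*b*r1 + (-2)*b*b + 24*a + (-1)*a*r2 + (-3)*a*r1 + (-3)*a*r0 + 9*a*a) * X^2
      + C (32 + (-1)*r3 + (-4)*r2 + (-6)*r1 + (-4)*r0 + 4*c + 2*c*r3 + 2*b*r3 + 24*a + (-2)*a*r2 + (-2)*a*r1 + (-4)*a*b) * X^3
      + C (24 + (-3)*r3 + (-5)*r2 + (-3)*r1 + (-2)*b + 1*b*r3 + (-1)*a*r2 + (-3)*a*a) * X^4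
      + C ((-3)*r3 + (-2)*r2 + (-6)*a) * X^5
      + C ((-4) + (-1)*r3) * X^6 = 0 := by
    have hD1 : derivative (X^4 + C a * X^3 + C b * X^2 + C c * X + C d)
        = C 4 * X^3 + C (3*a) * X^2 + C (2*b) * X + C c := by
      simp only [derivative_add, derivative_mul, derivative_X_pow, derivative_C, derivative_X,
        derivative_ofNat, derivative_one, Nat.cast_ofNat, Nat.cast_one, map_mul, map_ofNat]
      ring
    have hD2 : derivative (C 4 * X^3 + C (3*a) * X^2 + C (2*b) * X + C c)
        = C 12 * X^2 + C (6*a) * X + C (2*b) := by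
      simp only [derivative_add, derivative_mul, derivative_X_pow, derivative_C, derivative_X,
        derivative_ofNat, derivative_one, Nat.cast_ofNat, Nat.cast_one, map_mul, map_ofNat]
      ring
    rw [hD1, hD2] at heq'
    simp only [add_comp, mul_comp, pow_comp, X_comp, C_comp] at heq'
    simp only [map_add, map_mul, map_neg, map_ofNat, map_one, neg_mul, one_mul] at heq' ⊢
    linear_combination heq'
  -- extract scalar coefficient equations
  have g6 := congrArg (fun f => Polynomial.coeff f 6) hBig
  have g5 := congrArg (fun f => Polynomial.coeff f 5) hBig
  have g4 := congrArg (fun f => Polynomial.coeff f 4) hBig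
  have g3 := congrArg (fun f => Polynomial.coeff f 3) hBig
  have g2 := congrArg (fun f => Polynomial.coeff f 2) hBig
  have g1 := congrArg (fun f => Polynomial.coeff f 1) hBig
  have g0 := congrArg (fun f => Polynomial.coeff f 0) hBig
  simp only [coeff_add, coeff_C_mul, coeff_X_pow, coeff_X, coeff_C, coeff_zero,
    mul_one, mul_zero, add_zero, zero_add] at g6 g5 g4 g3 g2 g1 g0
  norm_num at g6 g5 g4 g3 g2 g1 g0
  have hs3 : r3 = -4 := by linear_combination -g6
  rw [hs3] at g5 g4 g3 g2 g1 g0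
  have hs2 : r2 = 6 - 3*a := by linear_combination (-1/2 : ℂ) * g5
  rw [hs2] at g4 g3 g2 g1 g0
  have hs1 : r1 = 2 + 3*a - 2*b := by linear_combination (-1/3 : ℂ) * g4
  rw [hs1] at g3 g2 g1 g0
  have hs0 : r0 = a/2 + b - c := by linear_combination (-1/4 : ℂ) * g3
  rw [hs0] at g2 g1 g0
  have hb : b = 3/8*a^2 - 1/2 := by linear_combination (-1/4 : ℂ) * g2
  rw [hb] at g1 g0
  have hc : c = (a^3 - 4*a)/16 := by linear_combination (-1/6 : ℂ) * g1
  rw [hc] at g0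
  have hd : d = (4 - a^2)^2/256 := by linear_combination (1/4 : ℂ) * g0
  -- conclude
  refine ⟨(2 - a)/4, ?_⟩
  set t := (2 - a)/4 with htdef
  have ha2 : a = 2 - 4*t := by rw [htdef]; ring
  have hb2 : b = 6*t^2 - 6*t + 1 := by rw [ha2] at hb; linear_combination hb
  have hc2 : c = -(4*t^3) + 6*t^2 - 2*t := by rw [ha2] at hc; linear_combination hc
  have hd2 : d = t^4 - 2*t^3 + t^2 := by rw [ha2] at hd; linear_combination hd
  rw [hP, ha2, hb2, hc2, hd2]
  simp only [map_add, map_sub, map_mul, map_pow, map_one, map_ofNat, map_neg]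
  ring

theorem stmt_8 :
    (¬ ∃ (P Q : ℂ[X]) (p : Fin 4 → ℂ),
        Function.Injective p ∧ P = ∏ j, (X - C (p j)) ∧
        derivative (derivative P) * P.comp (X + 1)
          - derivative P * (derivative P).comp (X + 1)
          + P * Q.comp (X + 1) - P.comp (X + 1) * Q = 0) ∧
    (∀ (P Q : ℂ[X]), P.Monic → P.natDegree = 4 →
        derivative (derivative P) * P.comp (X + 1)
          - derivative P * (derivative P).comp (X + 1)
          + P * Q.comp (X + 1) - P.comp (X + 1) * Q = 0 →
        ∃ c : ℂ, P = (X - C c) ^ 2 * (X - C c + 1) ^ 2) := by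
  constructor
  · rintro ⟨P, Q, p, hinj, hPdef, heq⟩
    have hmonic : P.Monic := by
      rw [hPdef]; exact monic_prod_of_monic _ _ (fun j _ => monic_X_sub_C (p j))
    have hdeg : P.natDegree = 4 := by
      rw [hPdef, natDegree_prod _ _ (fun j _ => X_sub_C_ne_zero (p j))]
      simp
    obtain ⟨t, ht⟩ := main_stmt8 P Q hmonic hdeg heq
    have hsep : P.Separable := by
      rw [hPdef]; exact separable_prod_X_sub_C_iff.mpr hinj
    have hsq : Squarefree P := hsep.squarefree
    have : IsUnit (X - C t : ℂ[X]) := by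
      refine hsq (X - C t) ⟨(X - C t + 1)^2, ?_⟩
      rw [ht]; ring
    exact not_isUnit_X_sub_C t this
  · exact main_stmt8
end

section
/- Let p_1 = 1 and q_1 = α with α ∉ {0, 1} and α² - α + 1 ≠ 0. Then p_2 = α + 1 + √(α²-α+1) and q_2 = α + 1 - √(α²-α+1) satisfy the system 2/(p_1 - q_1) = 2/p_1 + 1/(p_1 - p_2) + 1/(p_1 - q_2) and 2/(q_1 - p_1) = 2/q_1 + 1/(q_1 - p_2) + 1/(q_1 - q_2), provided all denominators are nonzero. -/
/-!
The points `p₂ = α + 1 + s` and `q₂ = α + 1 - s` are the roots of `X² - 2(α + 1)X + 3α`, so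
`1/(z - p₂) + 1/(z - q₂) = (2z - 2(α + 1)) / (z² - 2(α + 1)z + 3α)`. At `z = 1` this denominator is
`α - 1` and at `z = α` it is `α(1 - α)`; both are nonzero once `α ∉ {0, 1}`, and each balancing
equation becomes an identity of rational functions in `α`.
-/

section

variable {K : Type*} [Field K]

theorem one_div_sub_add_one_div_sub {z p q : K} (h : (z - p) * (z - q) ≠ 0) :
    1 / (z - p) + 1 / (z - q) = (2 * z - (p + q)) / ((z - p) * (z - q)) := by
  obtain ⟨hp, hq⟩ := mul_ne_zero_iff.mp h
  rw [div_add_div _ _ hp hq]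
  ring

theorem sub_mul_sub_eq_of_sq_eq {α s p q : K} (hs : s ^ 2 = α ^ 2 - α + 1)
    (hp : p = α + 1 + s) (hq : q = α + 1 - s) (z : K) :
    (z - p) * (z - q) = z ^ 2 - 2 * (α + 1) * z + 3 * α := by
  subst hp hq
  linear_combination -hs

end

theorem stmt_14_general (α s p₂ q₂ : ℂ)
    (hα0 : α ≠ 0) (hα1 : α ≠ 1)
    (hs : s ^ 2 = α ^ 2 - α + 1)
    (hp₂ : p₂ = α + 1 + s) (hq₂ : q₂ = α + 1 - s) :
    2 / ((1 : ℂ) - α) = 2 / (1 : ℂ) + 1 / (1 - p₂) + 1 / (1 - q₂) ∧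
    2 / (α - 1) = 2 / α + 1 / (α - p₂) + 1 / (α - q₂) := by
  have hsum : p₂ + q₂ = 2 * (α + 1) := by rw [hp₂, hq₂]; ring
  have hprod₁ : (1 - p₂) * (1 - q₂) = α - 1 := by
    rw [sub_mul_sub_eq_of_sq_eq hs hp₂ hq₂]; ring
  have hprodα : (α - p₂) * (α - q₂) = α * (1 - α) := by
    rw [sub_mul_sub_eq_of_sq_eq hs hp₂ hq₂]; ring
  have hα1' : α - 1 ≠ 0 := sub_ne_zero.mpr hα1
  have h1α : 1 - α ≠ 0 := sub_ne_zero.mpr hα1.symm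
  constructor
  · rw [add_assoc, one_div_sub_add_one_div_sub (hprod₁ ▸ hα1'), hprod₁, hsum]
    field_simp
    ring
  · rw [add_assoc, one_div_sub_add_one_div_sub (hprodα ▸ mul_ne_zero hα0 h1α), hprodα, hsum]
    field_simp
    ring

theorem stmt_14 (α s p₂ q₂ : ℂ)
    (hα0 : α ≠ 0) (hα1 : α ≠ 1) (hdisc : α ^ 2 - α + 1 ≠ 0)
    (hs : s ^ 2 = α ^ 2 - α + 1)
    (hp₂ : p₂ = α + 1 + s) (hq₂ : q₂ = α + 1 - s)
    (h1p : (1 : ℂ) - p₂ ≠ 0) (h1q : (1 : ℂ) - q₂ ≠ 0)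
    (hαp : α - p₂ ≠ 0) (hαq : α - q₂ ≠ 0) :
    2 / ((1 : ℂ) - α) = 2 / (1 : ℂ) + 1 / (1 - p₂) + 1 / (1 - q₂) ∧
    2 / (α - 1) = 2 / α + 1 / (α - p₂) + 1 / (α - q₂) :=
  stmt_14_general α s p₂ q₂ hα0 hα1 hs hp₂ hq₂
end

section
/- Let P_{k-1}, P_k, P_{k+1} be monic quadratic polynomials P_j(z) = z² + a_j z + b_j, and let p be a root of P_k with 2p + a_k ≠ 0. If P_{k-1}(p) ≠ 0 and P_{k+1}(p) ≠ 0, then the relation 2/(2p + a_k) - P_{k-1}'(p)/P_{k-1}(p) - P_{k+1}'(p)/P_{k+1}(p) = 0 is equivalent to A_k p + B_k = 0, where A_k = -(a_{k-1} - a_k)(a_k a_{k+1} - 4b_k) - (a_{k+1} - a_k)(a_k a_{k-1} - 4b_k) + 2(a_k - a_{k-1})(a_k - a_{k+1})a_k and B_k = 2(a_k - a_{k-1})(a_k - a_{k+1})b_k + 2(b_{k-1} - b_k)(b_{k+1} - b_k) - (a_k a_{k-1} - 4b_k)(b_{k+1} - b_k) - (a_k a_{k+1} - 4b_k)(b_{k-1}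 - b_k). -/
/-!
Clearing the three denominators turns the balancing condition into a polynomial equation of
degree four in `p`. At a root `p` of `P_k` each `P_{k±1}(p) = P_{k±1}(p) - P_k(p)` is linear in `p`,
and reducing the remaining powers of `p` with `p² = -a_k p - b_k` leaves exactly `A_k p + B_k`.
-/

namespace MonicQuadraticBalance

variable {R : Type*} [CommRing R]

/- `coeffA` and `coeffB` are the paper's `A_k` and `B_k`; the arguments `am, a, ap` (and `bm, b, bp`)
are the coefficients of `P_{k-1}, P_k, P_{k+1}`. -/
def coeffA (am a ap b : R) : R :=
  -(am - a) * (a * ap - 4 * b) - (ap - a) * (a * am - 4 * b) + 2 * (a - am) * (a - ap) * a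

def coeffB (am a ap bm b bp : R) : R :=
  2 * (a - am) * (a - ap) * b + 2 * (bm - b) * (bp - b)
    - (a * am - 4 * b) * (bp - b) - (a * ap - 4 * b) * (bm - b)

theorem cleared_balance_eq_of_root {am a ap bm b bp p : R} (hroot : p ^ 2 + a * p + b = 0) :
    2 * ((p ^ 2 + am * p + bm) * (p ^ 2 + ap * p + bp))
        - (2 * p + a) * ((2 * p + am) * (p ^ 2 + ap * p + bp) + (2 * p + ap) * (p ^ 2 + am * p + bm))
      = coeffA am a ap b * p + coeffB am a ap bm b bp := by
  unfold coeffA coeffB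
  -- the coefficient is the quotient of the difference of the two sides by `P_k(p)`
  linear_combination (-6 * p ^ 2 - 2 * bp + 6 * b - 2 * bm - 4 * ap * p + 2 * a * p + a * ap
      - 2 * a ^ 2 - 4 * am * p - 2 * am * ap + am * a) * hroot

end MonicQuadraticBalance

theorem div_sub_div_sub_div_eq_zero_iff {K : Type*} [Field K] {w x y d u v : K}
    (hd : d ≠ 0) (hu : u ≠ 0) (hv : v ≠ 0) :
    w / d - x / u - y / v = 0 ↔ w * (u * v) - d * (x * v + y * u) = 0 := by
  rw [sub_sub, sub_eq_zero, div_add_div _ _ hu hv, div_eq_div_iff hd (mul_ne_zero hu hv),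
    sub_eq_zero, mul_comm d, mul_comm y u]

theorem stmt_15 (akm ak akp bkm bk bkp p : ℂ)
    (hroot : p ^ 2 + ak * p + bk = 0)
    (hden : 2 * p + ak ≠ 0)
    (hm : p ^ 2 + akm * p + bkm ≠ 0)
    (hp1 : p ^ 2 + akp * p + bkp ≠ 0)
    (A B : ℂ)
    (hA : A = -(akm - ak) * (ak * akp - 4 * bk) - (akp - ak) * (ak * akm - 4 * bk)
      + 2 * (ak - akm) * (ak - akp) * ak)
    (hB : B = 2 * (ak - akm) * (ak - akp) * bk + 2 * (bkm - bk) * (bkp - bk)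
      - (ak * akm - 4 * bk) * (bkp - bk) - (ak * akp - 4 * bk) * (bkm - bk)) :
    (2 / (2 * p + ak) - (2 * p + akm) / (p ^ 2 + akm * p + bkm)
        - (2 * p + akp) / (p ^ 2 + akp * p + bkp) = 0)
      ↔ A * p + B = 0 := by
  rw [div_sub_div_sub_div_eq_zero_iff hden hm hp1,
    MonicQuadraticBalance.cleared_balance_eq_of_root hroot, hA, hB]
  rfl
end
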